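/- Let n ≥ 2 be an integer and let q' : (0,1] → ℝ be measurable with L := ∫₀¹ t^n q'(t)² dt < ∞. Define q(x) := −∫_x^1 q'(t) dt. Then q is well defined and absolutely continuous on compact subintervals of (0,1], it satisfies q(x)² ≤ (L/(n−1)) · x^{1−n} for all x ∈ (0,1], and ∫₀¹ n x^{n−1} q(x)² dx ≤ (n/(n−1)) · L. -/

import Mathlib

/-! By AM–GM, `2 |q'(t)| ≤ ε t⁻ⁿ + tⁿ q'(t)² / ε` for every `ε > 0`. Integrated over `(x, 1]`,
this shows that `q'` is integrable there and, after optimising `ε`, gives the weighted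
Cauchy–Schwarz bound `q(x)² ≤ (∫ₓ¹ t⁻ⁿ dt) · L ≤ L x^(1-n) / (n-1)`. Hence the continuous
function `n x^(n-1) q(x)²` is bounded by `n L / (n-1)` on `(0, 1]`, an interval of length one. -/

open MeasureTheory Set

-- AM–GM for `ε w⁻¹` and `w y² / ε`, whose product is `y²`.
theorem two_mul_abs_le_mul_inv_add_mul_sq_div {w ε : ℝ} (hw : 0 < w) (hε : 0 < ε) (y : ℝ) :
    2 * |y| ≤ ε * w⁻¹ + w * y ^ 2 / ε := by
  have key : ε * w⁻¹ + w * y ^ 2 / ε - 2 * |y| = (ε - w * |y|) ^ 2 / (ε * w) := by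
    field_simp
    rw [← sq_abs y]
    ring
  have : 0 ≤ (ε - w * |y|) ^ 2 / (ε * w) := by positivity
  linarith

theorem sq_le_mul_of_forall_two_mul_le {A B C : ℝ} (hA : 0 ≤ A) (hB : 0 ≤ B) (hC : 0 ≤ C)
    (h : ∀ ε > 0, 2 * C ≤ ε * A + B / ε) : C ^ 2 ≤ A * B := by
  -- Multiplied by `ε`, the hypothesis says that `A ε² - 2 C ε + B` is nonnegative.
  have hdisc : discrim A (-2 * C) B ≤ 0 := by
    refine discrim_le_zero fun ε => ?_
    rcases le_or_gt ε 0 with hε | hε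
    · nlinarith
    · have h' := mul_le_mul_of_nonneg_left (h ε hε) hε.le
      rw [mul_add, mul_div_cancel₀ B hε.ne'] at h'
      nlinarith
  rw [discrim] at hdisc
  nlinarith

section Weighted

variable {α : Type*} [MeasurableSpace α] {μ : Measure α} {w f : α → ℝ}

theorem integrable_of_integrable_inv_of_integrable_mul_sq (hw : ∀ᵐ a ∂μ, 0 < w a)
    (hf : AEStronglyMeasurable f μ) (hwinv : Integrable (fun a => (w a)⁻¹) μ)
    (hwf : Integrable (fun a => w a * f a ^ 2) μ) : Integrable f μ := by
  refine ((hwinv.add hwf).div_const 2).mono' hf ?_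
  filter_upwards [hw] with a ha
  have := two_mul_abs_le_mul_inv_add_mul_sq_div ha one_pos (f a)
  simp only [Pi.add_apply, Real.norm_eq_abs, one_mul, div_one] at this ⊢
  linarith

theorem sq_integral_abs_le_integral_inv_mul_integral_mul_sq (hw : ∀ᵐ a ∂μ, 0 < w a)
    (hwinv : Integrable (fun a => (w a)⁻¹) μ) (hwf : Integrable (fun a => w a * f a ^ 2) μ) :
    (∫ a, |f a| ∂μ) ^ 2 ≤ (∫ a, (w a)⁻¹ ∂μ) * ∫ a, w a * f a ^ 2 ∂μ := by
  refine sq_le_mul_of_forall_two_mul_le ?_ ?_ (integral_nonneg fun a => abs_nonneg _)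
    fun ε hε => ?_
  · exact integral_nonneg_of_ae (hw.mono fun a ha => inv_nonneg.2 ha.le)
  · exact integral_nonneg_of_ae (hw.mono fun a ha => by positivity)
  calc 2 * ∫ a, |f a| ∂μ = ∫ a, 2 * |f a| ∂μ := (integral_const_mul _ _).symm
    _ ≤ ∫ a, ε * (w a)⁻¹ + w a * f a ^ 2 / ε ∂μ := by
      refine integral_mono_of_nonneg (ae_of_all _ fun a => by positivity)
        ((hwinv.const_mul ε).add (hwf.div_const ε)) ?_
      filter_upwards [hw] with a ha using two_mul_abs_le_mul_inv_add_mul_sq_div ha hε (f a)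
    _ = ε * ∫ a, (w a)⁻¹ ∂μ + (∫ a, w a * f a ^ 2 ∂μ) / ε := by
      rw [integral_add (hwinv.const_mul ε) (hwf.div_const ε), integral_const_mul, integral_div]

end Weighted

theorem integral_inv_pow_le {n : ℕ} (hn : 2 ≤ n) {x : ℝ} (hx : 0 < x) :
    ∫ t in x..1, (t ^ n)⁻¹ ≤ x ^ (1 - n : ℤ) / (n - 1) := by
  have hn1 : (0 : ℝ) < n - 1 := by
    have : (2 : ℝ) ≤ n := by exact_mod_cast hn
    linarith
  have h0 : (0 : ℝ) ∉ uIcc x 1 := fun h => by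
    rcases (mem_uIcc.1 h) with h | h <;> linarith [h.1]
  have hval : ∫ t in x..1, (t ^ n)⁻¹ = (x ^ (1 - n : ℤ) - 1) / (n - 1) := by
    simp_rw [← zpow_natCast, ← zpow_neg]
    rw [integral_zpow (Or.inr ⟨by omega, h0⟩), one_zpow,
      div_eq_div_iff (by push_cast; linarith) hn1.ne']
    push_cast
    ring_nf
  rw [hval]
  gcongr
  linarith

theorem pow_pred_mul_zpow_one_sub {x : ℝ} (hx : x ≠ 0) {n : ℕ} (hn : 1 ≤ n) :
    x ^ (n - 1) * x ^ (1 - n : ℤ) = 1 := by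
  rw [← zpow_natCast, ← zpow_add₀ hx, Nat.cast_sub hn]
  simp

theorem continuousOn_intervalIntegral_left_of_Ioc {f : ℝ → ℝ} {a b : ℝ}
    (hf : ∀ x ∈ Ioc a b, IntervalIntegrable f volume x b) :
    ContinuousOn (fun x => ∫ t in x..b, f t) (Ioc a b) := by
  rintro x ⟨hax, hxb⟩
  obtain ⟨c, hac, hcx⟩ := exists_between hax
  have hcb : c ≤ b := hcx.le.trans hxb
  have hcont := intervalIntegral.continuousOn_primitive_interval_left
    ((intervalIntegrable_iff' (f := f)).1 (hf c ⟨hac, hcb⟩))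
  rw [uIcc_of_le hcb] at hcont
  refine (hcont x ⟨hcx.le, hxb⟩).mono_of_mem_nhdsWithin ?_
  exact mem_nhdsWithin.2 ⟨Ioi c, isOpen_Ioi, hcx, fun y hy => ⟨le_of_lt hy.1, hy.2.2⟩⟩

section WeightedSquare

variable {n : ℕ} {f : ℝ → ℝ} {x b : ℝ}

theorem integrableOn_inv_pow_Ioc (hx : 0 < x) :
    IntegrableOn (fun t : ℝ => (t ^ n)⁻¹) (Ioc x b) := by
  refine (ContinuousOn.integrableOn_Icc ?_).mono_set Ioc_subset_Icc_self
  exact (continuousOn_pow n).inv₀ fun t ht => pow_ne_zero n (hx.trans_le ht.1).ne'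

theorem ae_restrict_Ioc_pow_pos (hx : 0 < x) :
    ∀ᵐ t ∂volume.restrict (Ioc x b), 0 < t ^ n :=
  ae_restrict_of_forall_mem measurableSet_Ioc fun _ ht => pow_pos (hx.trans ht.1) n

theorem intervalIntegrable_of_integrableOn_pow_mul_sq (hf : AEStronglyMeasurable f)
    (hx : 0 < x) (hxb : x ≤ b) (hL : IntegrableOn (fun t => t ^ n * f t ^ 2) (Ioc x b)) :
    IntervalIntegrable f volume x b :=
  (intervalIntegrable_iff_integrableOn_Ioc_of_le hxb).2 <|
    integrable_of_integrable_inv_of_integrable_mul_sq (ae_restrict_Ioc_pow_pos hx)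
      hf.restrict (integrableOn_inv_pow_Ioc hx) hL

theorem sq_intervalIntegral_le_of_integrableOn_pow_mul_sq (hn : 2 ≤ n)
    (hL : IntegrableOn (fun t => t ^ n * f t ^ 2) (Ioc 0 1)) (hx : x ∈ Ioc (0 : ℝ) 1) :
    (∫ t in x..1, f t) ^ 2 ≤
      (∫ t in Ioc (0 : ℝ) 1, t ^ n * f t ^ 2) / (n - 1) * x ^ (1 - n : ℤ) := by
  have hsub : Ioc x 1 ⊆ Ioc 0 1 := Ioc_subset_Ioc_left hx.1.le
  have hn1 : (0 : ℝ) < n - 1 := by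
    have : (2 : ℝ) ≤ n := by exact_mod_cast hn
    linarith
  have hL_nonneg : 0 ≤ ∫ t in Ioc (0 : ℝ) 1, t ^ n * f t ^ 2 :=
    setIntegral_nonneg measurableSet_Ioc fun t ht => by have := ht.1; positivity
  calc (∫ t in x..1, f t) ^ 2 ≤ (∫ t in Ioc x 1, |f t|) ^ 2 := by
        rw [← intervalIntegral.integral_of_le hx.2, ← sq_abs]
        exact pow_le_pow_left₀ (abs_nonneg _)
          (intervalIntegral.abs_integral_le_integral_abs hx.2) 2
    _ ≤ (∫ t in Ioc x 1, (t ^ n)⁻¹) * ∫ t in Ioc x 1, t ^ n * f t ^ 2 :=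
        sq_integral_abs_le_integral_inv_mul_integral_mul_sq (ae_restrict_Ioc_pow_pos hx.1)
          (integrableOn_inv_pow_Ioc hx.1) (hL.mono_set hsub)
    _ ≤ x ^ (1 - n : ℤ) / (n - 1) * ∫ t in Ioc (0 : ℝ) 1, t ^ n * f t ^ 2 := by
        rw [← intervalIntegral.integral_of_le hx.2]
        refine mul_le_mul (integral_inv_pow_le hn hx.1) ?_ ?_
          (div_nonneg (zpow_nonneg hx.1.le _) hn1.le)
        · refine setIntegral_mono_set hL ?_ hsub.eventuallyLE
          exact ae_restrict_of_forall_mem measurableSet_Ioc fun t ht => by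
            have := ht.1; positivity
        · exact setIntegral_nonneg measurableSet_Ioc fun t ht => by
            have := hx.1.trans ht.1; positivity
    _ = _ := by ring

end WeightedSquare

theorem gpy_primitive_bounds (n : ℕ) (hn : 2 ≤ n) (q' : ℝ → ℝ) (hmeas : Measurable q')
    (hL : IntegrableOn (fun t => t ^ n * (q' t) ^ 2) (Set.Ioc 0 1) volume) :
    (∀ x ∈ Set.Ioc (0:ℝ) 1, IntervalIntegrable q' volume x 1) ∧
    (∀ a ∈ Set.Ioc (0:ℝ) 1, ∀ b ∈ Set.Ioc (0:ℝ) 1, a ≤ b →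
      (-∫ t in b..1, q' t) - (-∫ t in a..1, q' t) = ∫ t in a..b, q' t) ∧
    (∀ x ∈ Set.Ioc (0:ℝ) 1,
      (-∫ t in x..1, q' t) ^ 2 ≤
        ((∫ t in Set.Ioc (0:ℝ) 1, t ^ n * (q' t) ^ 2) / ((n : ℝ) - 1)) * x ^ ((1 : ℤ) - n)) ∧
    IntegrableOn (fun x => (n : ℝ) * x ^ (n - 1) * (-∫ t in x..1, q' t) ^ 2)
      (Set.Ioc 0 1) volume ∧
    ∫ x in Set.Ioc (0:ℝ) 1, (n : ℝ) * x ^ (n - 1) * (-∫ t in x..1, q' t) ^ 2 ≤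
      ((n : ℝ) / ((n : ℝ) - 1)) * ∫ t in Set.Ioc (0:ℝ) 1, t ^ n * (q' t) ^ 2 := by
  set L := ∫ t in Ioc (0 : ℝ) 1, t ^ n * q' t ^ 2
  have hII : ∀ x ∈ Ioc (0 : ℝ) 1, IntervalIntegrable q' volume x 1 := fun x hx =>
    intervalIntegrable_of_integrableOn_pow_mul_sq hmeas.aestronglyMeasurable hx.1 hx.2
      (hL.mono_set (Ioc_subset_Ioc_left hx.1.le))
  have hsq : ∀ x ∈ Ioc (0 : ℝ) 1, (-∫ t in x..1, q' t) ^ 2 ≤ L / (n - 1) * x ^ (1 - n : ℤ) :=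
    fun x hx => by
      rw [neg_sq]
      exact sq_intervalIntegral_le_of_integrableOn_pow_mul_sq hn hL hx
  have hbound : ∀ x ∈ Ioc (0 : ℝ) 1,
      ‖(n : ℝ) * x ^ (n - 1) * (-∫ t in x..1, q' t) ^ 2‖ ≤ n / (n - 1) * L := fun x hx => by
    rw [Real.norm_of_nonneg (by have := hx.1; positivity)]
    calc (n : ℝ) * x ^ (n - 1) * (-∫ t in x..1, q' t) ^ 2
        ≤ n * x ^ (n - 1) * (L / (n - 1) * x ^ (1 - n : ℤ)) := by
          exact mul_le_mul_of_nonneg_left (hsq x hx) (by have := hx.1; positivity)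
      _ = n / (n - 1) * L * (x ^ (n - 1) * x ^ (1 - n : ℤ)) := by ring
      _ = n / (n - 1) * L := by rw [pow_pred_mul_zpow_one_sub hx.1.ne' (by omega), mul_one]
  have hcont : ContinuousOn (fun x => (n : ℝ) * x ^ (n - 1) * (-∫ t in x..1, q' t) ^ 2)
      (Ioc 0 1) :=
    (continuousOn_const.mul (continuousOn_pow _)).mul
      ((continuousOn_intervalIntegral_left_of_Ioc hII).neg.pow 2)
  refine ⟨hII, fun a ha b hb _ => ?_, hsq, ?_, ?_⟩
  · rw [← intervalIntegral.integral_interval_sub_left (hII a ha)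
      ((hII a ha).trans (hII b hb).symm)]
    ring
  · exact IntegrableOn.of_bound measure_Ioc_lt_top (hcont.aestronglyMeasurable measurableSet_Ioc)
      _ (ae_restrict_of_forall_mem measurableSet_Ioc hbound)
  · calc _ ≤ n / (n - 1) * L * volume.real (Ioc (0 : ℝ) 1) :=
          (le_abs_self _).trans (norm_setIntegral_le_of_norm_le_const measure_Ioc_lt_top hbound)
      _ = n / (n - 1) * L := by simp
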